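/- For every signed permutation π ∈ B_n with π_n > 0, the sum of the descent positions i ∈ [n-1] with π_i > 0 > π_{i+1} plus neg(π) equals the sum of the ascent positions i ∈ [n-1] with π_i < 0 < π_{i+1}. -/
import Mathlib


open Finset

/-- `f : ℕ → ℤ` represents a signed permutation of `{1,...,n}` via its values
`f 1, ..., f n ∈ {±1,...,±n}` (the absolute values forming a permutation of `{1,...,n}`),
with `f i = 0` for `i = 0` and `i > n`. -/
def IsSignedPerm (n : ℕ) (f : ℕ → ℤ) : Prop :=
  (∀ i, 1 ≤ i → i ≤ n → 1 ≤ |f i| ∧ |f i| ≤ n) ∧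
  (∀ i j, 1 ≤ i → i ≤ n → 1 ≤ j → j ≤ n → |f i| = |f j| → i = j) ∧
  (∀ i, i = 0 ∨ n < i → f i = 0)

/-- `neg(f)`, the number of negative entries. -/
def negCount (n : ℕ) (f : ℕ → ℤ) : ℕ :=
  ((Finset.Icc 1 n).filter fun i => f i < 0).card

lemma abel_aux (g : ℕ → ℤ) (m : ℕ) :
    ∑ i ∈ range m, ((i : ℤ) + 1) * (g (i + 2) - g (i + 1)) =
      (m : ℤ) * g (m + 1) - ∑ i ∈ range m, g (i + 1) := by
  induction m with
  | zero => simp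
  | succ m ih => rw [sum_range_succ, sum_range_succ, ih]; push_cast; ring

theorem stmt7 (n : ℕ) (f : ℕ → ℤ) (hf : IsSignedPerm n f) (hn : 0 < f n) :
    (∑ i ∈ (Finset.Icc 1 (n - 1)).filter fun i => 0 < f i ∧ f (i + 1) < 0, i)
        + negCount n f =
      (∑ i ∈ (Finset.Icc 1 (n - 1)).filter fun i => f i < 0 ∧ 0 < f (i + 1), i) := by
  obtain ⟨h1, h2, h3⟩ := hf
  rcases Nat.eq_zero_or_pos n with rfl | hn1
  · simp [h3 0 (Or.inl rfl)] at hn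
  set g : ℕ → ℤ := fun i => if f i < 0 then 1 else 0 with hg
  have hfne : ∀ i, 1 ≤ i → i ≤ n → f i ≠ 0 := by
    intro i hi hi' h
    have := (h1 i hi hi').1
    simp [h] at this
  have hgn : g n = 0 := by simp [hg, not_lt.mpr hn.le]
  have key1 : ∑ i ∈ Icc 1 (n - 1), (i : ℤ) * (g (i + 1) - g i) =
      - ∑ i ∈ Icc 1 n, g i := by
    rw [← Finset.Ico_add_one_right_eq_Icc, ← Finset.Ico_add_one_right_eq_Icc, Finset.sum_Ico_eq_sum_range,
      Finset.sum_Ico_eq_sum_range]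
    have e1 : n - 1 + 1 - 1 = n - 1 := by omega
    have e2 : n + 1 - 1 = n := by omega
    rw [e1, e2]
    have : ∀ i : ℕ, (↑(1 + i) : ℤ) * (g (1 + i + 1) - g (1 + i)) =
        ((i : ℤ) + 1) * (g (i + 2) - g (i + 1)) := by
      intro i
      have : 1 + i = i + 1 := by omega
      rw [this]
      push_cast
      ring_nf
    rw [Finset.sum_congr rfl (fun i _ => this i), abel_aux]
    have e3 : n - 1 + 1 = n := by omega
    rw [e3, hgn]
    have : ∑ i ∈ range n, g (1 + i) = ∑ i ∈ range (n - 1), g (i + 1) + g n := by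
      have : n = (n - 1) + 1 := by omega
      rw [this, sum_range_succ]
      congr 1
      · exact Finset.sum_congr rfl fun i _ => by rw [Nat.add_comm]
      · congr 1; omega
    rw [this, hgn]
    ring
  have key2 : ∑ i ∈ Icc 1 (n - 1), (i : ℤ) * (g (i + 1) - g i)
      = (∑ i ∈ (Icc 1 (n - 1)).filter (fun i => 0 < f i ∧ f (i + 1) < 0), (i : ℤ))
        - ∑ i ∈ (Icc 1 (n - 1)).filter (fun i => f i < 0 ∧ 0 < f (i + 1)), (i : ℤ) := by
    rw [sum_filter, sum_filter, ← Finset.sum_sub_distrib]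
    refine Finset.sum_congr rfl fun i hi => ?_
    simp only [mem_Icc] at hi
    have hi1 : f i ≠ 0 := hfne i hi.1 (le_trans hi.2 (Nat.sub_le n 1))
    have hi2 : f (i + 1) ≠ 0 := hfne (i + 1) (by omega) (by omega)
    rcases hi1.lt_or_gt with h | h <;> rcases hi2.lt_or_gt with h' | h' <;>
      simp [hg, h, h', h.asymm, h'.asymm]
  have key3 : ∑ i ∈ Icc 1 n, g i = (negCount n f : ℤ) := by
    simp [hg, negCount, Finset.sum_boole]
  have hD : ((∑ i ∈ (Icc 1 (n - 1)).filter (fun i => 0 < f i ∧ f (i + 1) < 0), i : ℕ) : ℤ)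
      = ∑ i ∈ (Icc 1 (n - 1)).filter (fun i => 0 < f i ∧ f (i + 1) < 0), (i : ℤ) := by
    push_cast; rfl
  have hA : ((∑ i ∈ (Icc 1 (n - 1)).filter (fun i => f i < 0 ∧ 0 < f (i + 1)), i : ℕ) : ℤ)
      = ∑ i ∈ (Icc 1 (n - 1)).filter (fun i => f i < 0 ∧ 0 < f (i + 1)), (i : ℤ) := by
    push_cast; rfl
  have : ((∑ i ∈ (Icc 1 (n - 1)).filter (fun i => 0 < f i ∧ f (i + 1) < 0), i : ℕ) : ℤ)
      + (negCount n f : ℤ)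
      = ((∑ i ∈ (Icc 1 (n - 1)).filter (fun i => f i < 0 ∧ 0 < f (i + 1)), i : ℕ) : ℤ) := by
    rw [hD, hA]; linarith [key1, key2, key3]
  exact_mod_cast this
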